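/- Let k be a field of characteristic zero and (R,Δ) a commutative differential k-algebra with R a finitely generated (affine) k-algebra. Then the rule π_m(M) = (M:Δ) defines a continuous surjection π_m : max R → Δ-prim R. If, in addition, every Δ-primitive ideal of R is a locally closed point of Δ-spec R, then the Zariski topology on Δ-prim R equals the quotient topology induced by π_m: a subset W ⊆ Δ-prim R is closed if and only if π_m^{-1}(W) is closed in max R. -/

import Mathlib

/-!
Continuity of `M ↦ (M:Δ)` holds because the `Δ`-closure `[I]` of an ideal and the `Δ`-core form
a Galois connection: `I ⊆ (M:Δ)` iff `[I] ⊆ M`.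

For the quotient topology, let the preimage of `W ⊆ Δ-prim R` be cut out by `I`. A primitive
ideal that contains `I` is `(M:Δ)` with `I ⊆ M`, so it lies in `W`. Conversely let `Q ∈ W`, with
`{Q}` open in its closure, cut out by `J ⊄ Q'`. Each maximal `M ⊇ Q` either contains `J`, or
`(M:Δ)` is a `Δ`-prime between `Q` and `M` avoiding `J`, hence equals `Q`, and then `I ⊆ M`.
In characteristic zero `Δ`-primes of a noetherian ring are radical, so in a Jacobson ring `Q` is
the intersection of the maximal ideals above it and `IJ ⊆ Q`. Finally, colon ideals of a radical
`Δ`-ideal are `Δ`-ideals, so a radical `Δ`-prime behaves like a prime for products of arbitrary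
ideals, and `J ⊄ Q` gives `I ⊆ Q`.
-/

section Defs

variable {k R : Type*} [CommRing k] [CommRing R] [Algebra k R]

/-- An ideal stable under all derivations in `Δ`. -/
def IsDeltaIdeal (Δ : Set (Derivation k R R)) (I : Ideal R) : Prop :=
  ∀ δ ∈ Δ, ∀ x ∈ I, δ x ∈ I

/-- The `Δ`-core of an ideal `J`: the largest `Δ`-stable ideal contained in `J`. -/
def deltaCore (Δ : Set (Derivation k R R)) (J : Ideal R) : Ideal R :=
  sSup {I : Ideal R | IsDeltaIdeal Δ I ∧ I ≤ J}

/-- A `Δ`-prime ideal: a proper `Δ`-ideal `Q` such that whenever a product of two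
`Δ`-ideals lies in `Q`, one of them lies in `Q`. -/
def IsDeltaPrime (Δ : Set (Derivation k R R)) (Q : Ideal R) : Prop :=
  Q ≠ ⊤ ∧ IsDeltaIdeal Δ Q ∧
    ∀ I J : Ideal R, IsDeltaIdeal Δ I → IsDeltaIdeal Δ J → I * J ≤ Q → I ≤ Q ∨ J ≤ Q

/-- A `Δ`-primitive ideal: the `Δ`-core of a maximal ideal. -/
def IsDeltaPrimitive (Δ : Set (Derivation k R R)) (P : Ideal R) : Prop :=
  ∃ M : Ideal R, M.IsMaximal ∧ deltaCore Δ M = P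

end Defs

section DeltaIdeals

variable {k R : Type*} [CommRing k] [CommRing R] [Algebra k R] {Δ : Set (Derivation k R R)}

theorem isDeltaIdeal_top : IsDeltaIdeal Δ (⊤ : Ideal R) := fun _ _ _ _ => trivial

theorem isDeltaIdeal_sInf {S : Set (Ideal R)} (hS : ∀ I ∈ S, IsDeltaIdeal Δ I) :
    IsDeltaIdeal Δ (sInf S) := fun δ hδ x hx =>
  Submodule.mem_sInf.2 fun I hI => hS I hI δ hδ x (Submodule.mem_sInf.1 hx I hI)

theorem isDeltaIdeal_sSup {S : Set (Ideal R)} (hS : ∀ I ∈ S, IsDeltaIdeal Δ I) :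
    IsDeltaIdeal Δ (sSup S) := by
  intro δ hδ x hx
  rw [sSup_eq_iSup'] at hx ⊢
  refine Submodule.iSup_induction _ (motive := fun x => δ x ∈ _) hx ?_ ?_ ?_
  · exact fun I x hx => Submodule.mem_iSup_of_mem I (hS I I.2 δ hδ x hx)
  · rw [map_zero]; exact zero_mem _
  · intro x y hx hy; rw [map_add]; exact add_mem hx hy

theorem IsDeltaIdeal.mul {I J : Ideal R} (hI : IsDeltaIdeal Δ I) (hJ : IsDeltaIdeal Δ J) :
    IsDeltaIdeal Δ (I * J) := by
  intro δ hδ x hx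
  refine Submodule.mul_induction_on (C := fun x => δ x ∈ I * J) hx ?_ ?_
  · intro a ha b hb
    rw [Derivation.leibniz, smul_eq_mul, smul_eq_mul, mul_comm b]
    exact add_mem (Ideal.mul_mem_mul ha (hJ δ hδ b hb)) (Ideal.mul_mem_mul (hI δ hδ a ha) hb)
  · intro x y hx hy; rw [map_add]; exact add_mem hx hy

theorem IsDeltaIdeal.pow {I : Ideal R} (hI : IsDeltaIdeal Δ I) (n : ℕ) :
    IsDeltaIdeal Δ (I ^ n) := by
  induction n with
  | zero => rw [pow_zero, Ideal.one_eq_top]; exact isDeltaIdeal_top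
  | succ n ih => rw [pow_succ]; exact ih.mul hI

variable (Δ) in
def deltaClosure (I : Ideal R) : Ideal R :=
  sInf {J : Ideal R | IsDeltaIdeal Δ J ∧ I ≤ J}

theorem isDeltaIdeal_deltaClosure (I : Ideal R) : IsDeltaIdeal Δ (deltaClosure Δ I) :=
  isDeltaIdeal_sInf fun _ hJ => hJ.1

theorem le_deltaClosure (I : Ideal R) : I ≤ deltaClosure Δ I :=
  le_sInf fun _ hJ => hJ.2

theorem IsDeltaIdeal.deltaClosure_le_iff {I J : Ideal R} (hJ : IsDeltaIdeal Δ J) :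
    deltaClosure Δ I ≤ J ↔ I ≤ J :=
  ⟨(le_deltaClosure I).trans, fun h => sInf_le ⟨hJ, h⟩⟩

theorem isDeltaIdeal_deltaCore (J : Ideal R) : IsDeltaIdeal Δ (deltaCore Δ J) :=
  isDeltaIdeal_sSup fun _ hI => hI.1

theorem deltaCore_le (J : Ideal R) : deltaCore Δ J ≤ J :=
  sSup_le fun _ hI => hI.2

theorem IsDeltaIdeal.le_deltaCore {I J : Ideal R} (hI : IsDeltaIdeal Δ I) (h : I ≤ J) :
    I ≤ deltaCore Δ J :=
  le_sSup ⟨hI, h⟩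

variable (Δ) in
theorem gc_deltaClosure_deltaCore :
    GaloisConnection (deltaClosure Δ : Ideal R → Ideal R) (deltaCore Δ) := fun I J =>
  ⟨fun h => (le_deltaClosure I).trans ((isDeltaIdeal_deltaClosure I).le_deltaCore h),
    fun h => ((isDeltaIdeal_deltaCore J).deltaClosure_le_iff.2 h).trans (deltaCore_le J)⟩

variable (Δ) in
theorem setOf_isMaximal_le_deltaCore (I : Ideal R) :
    {M : Ideal R | M.IsMaximal ∧ I ≤ deltaCore Δ M} =
      {M : Ideal R | M.IsMaximal ∧ deltaClosure Δ I ≤ M} :=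
  Set.ext fun M => and_congr_right fun _ => (gc_deltaClosure_deltaCore Δ I M).symm

end DeltaIdeals

section Radical

variable {k R : Type*} [CommRing k] [CommRing R] [Algebra k R] {Δ : Set (Derivation k R R)}

theorem IsDeltaIdeal.mul_derivation_mem_of_isRadical {Q : Ideal R} (hQ : IsDeltaIdeal Δ Q)
    (hrad : Q.IsRadical) {δ : Derivation k R R} (hδ : δ ∈ Δ) {x y : R} (h : x * y ∈ Q) :
    x * δ y ∈ Q := by
  have hδxy : x * δ y + y * δ x ∈ Q := by
    simpa only [Derivation.leibniz, smul_eq_mul, add_comm] using hQ δ hδ _ h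
  refine hrad ⟨2, ?_⟩
  have hsq : (x * δ y) ^ 2 = x * δ y * (x * δ y + y * δ x) - x * y * (δ x * δ y) := by ring
  rw [hsq]
  exact Q.sub_mem (Q.mul_mem_left _ hδxy) (Q.mul_mem_right _ h)

theorem IsDeltaIdeal.colon_of_isRadical {Q : Ideal R} (hQ : IsDeltaIdeal Δ Q)
    (hrad : Q.IsRadical) (J : Ideal R) : IsDeltaIdeal Δ (Q.colon (J : Set R)) := by
  intro δ hδ x hx
  refine Submodule.mem_colon.2 fun y hy => ?_
  have hxy : x * y ∈ Q := Submodule.mem_colon.1 hx y hy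
  have hδx : δ x * y = δ (x * y) - x * δ y := by
    rw [Derivation.leibniz, smul_eq_mul, smul_eq_mul]; ring
  rw [smul_eq_mul, hδx]
  exact Q.sub_mem (hQ δ hδ _ hxy) (hQ.mul_derivation_mem_of_isRadical hrad hδ hxy)

theorem Ideal.le_colon_iff_mul_le {Q I J : Ideal R} : I ≤ Q.colon (J : Set R) ↔ I * J ≤ Q :=
  ⟨fun h => Ideal.mul_le.2 fun _ hx _ hy => Submodule.mem_colon.1 (h hx) _ hy,
    fun h _ hx => Submodule.mem_colon.2 fun _ hy => h (Ideal.mul_mem_mul hx hy)⟩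

theorem IsDeltaPrime.le_or_le_of_mul_le {Q I J : Ideal R} (hQ : IsDeltaPrime Δ Q)
    (hrad : Q.IsRadical) (h : I * J ≤ Q) : I ≤ Q ∨ J ≤ Q := by
  have hcolon := hQ.2.1.colon_of_isRadical hrad
  have hI : deltaClosure Δ I * J ≤ Q :=
    Ideal.le_colon_iff_mul_le.1 <| ((hcolon J).deltaClosure_le_iff).2 <|
      Ideal.le_colon_iff_mul_le.2 h
  have hJ : deltaClosure Δ I * deltaClosure Δ J ≤ Q := by
    rw [mul_comm] at hI ⊢
    exact Ideal.le_colon_iff_mul_le.1 <| ((hcolon _).deltaClosure_le_iff).2 <|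
      Ideal.le_colon_iff_mul_le.2 hI
  exact (hQ.2.2 _ _ (isDeltaIdeal_deltaClosure I) (isDeltaIdeal_deltaClosure J) hJ).imp
    (le_deltaClosure I).trans (le_deltaClosure J).trans

theorem IsDeltaPrime.le_of_pow_le {Q I : Ideal R} (hQ : IsDeltaPrime Δ Q)
    (hI : IsDeltaIdeal Δ I) {n : ℕ} (h : I ^ n ≤ Q) : I ≤ Q := by
  induction n with
  | zero => exact absurd (top_le_iff.1 (by simpa using h)) hQ.1
  | succ n ih =>
    rw [pow_succ] at h
    exact (hQ.2.2 _ _ (hI.pow n) hI h).elim ih id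

end Radical

section CharZero

theorem Ideal.mem_of_natCast_mul_mem (k : Type*) {R : Type*} [Field k] [CharZero k] [CommRing R]
    [Algebra k R] {I : Ideal R} {n : ℕ} (hn : n ≠ 0) {x : R} (h : (n : R) * x ∈ I) : x ∈ I := by
  have hunit : IsUnit (n : R) := by
    simpa using (IsUnit.mk0 (n : k) (Nat.cast_ne_zero.2 hn)).map (algebraMap k R)
  exact (I.unit_mul_mem_iff_mem hunit).1 h

variable {k R : Type*} [Field k] [CharZero k] [CommRing R] [Algebra k R]
  {Δ : Set (Derivation k R R)}

theorem IsDeltaIdeal.pow_mul_derivation_pow_mem {I : Ideal R} (hI : IsDeltaIdeal Δ I)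
    {δ : Derivation k R R} (hδ : δ ∈ Δ) {x : R} {b j : ℕ}
    (h : x ^ (b + 1) * δ x ^ (j + 1) ∈ I) : x ^ b * δ x ^ (j + 3) ∈ I := by
  have key : ((b + 1 : ℕ) : R) * (x ^ b * δ x ^ (j + 3)) =
      δ x * δ (x ^ (b + 1) * δ x ^ (j + 1)) -
        ((j + 1 : ℕ) : R) * (x ^ (b + 1) * δ x ^ (j + 1)) * δ (δ x) := by
    simp only [Derivation.leibniz, Derivation.leibniz_pow, smul_eq_mul, nsmul_eq_mul,
      Nat.add_sub_cancel]
    push_cast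
    ring
  refine Ideal.mem_of_natCast_mul_mem k (Nat.succ_ne_zero b) ?_
  rw [key]
  exact I.sub_mem (I.mul_mem_left _ (hI δ hδ _ h)) (I.mul_mem_right _ (I.mul_mem_left _ h))

theorem IsDeltaIdeal.derivation_pow_mem_of_pow_mem {I : Ideal R} (hI : IsDeltaIdeal Δ I)
    {δ : Derivation k R R} (hδ : δ ∈ Δ) {x : R} {n : ℕ} (h : x ^ (n + 1) ∈ I) :
    δ x ^ (2 * n + 1) ∈ I := by
  have hbase : x ^ n * δ x ∈ I := by
    refine Ideal.mem_of_natCast_mul_mem k (Nat.succ_ne_zero n) ?_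
    have hδpow := hI δ hδ _ h
    rw [Derivation.leibniz_pow, Nat.add_sub_cancel, nsmul_eq_mul, smul_eq_mul] at hδpow
    exact hδpow
  have hstep : ∀ m b : ℕ, x ^ (b + m) * δ x ∈ I → x ^ b * δ x ^ (2 * m + 1) ∈ I := by
    intro m
    induction m with
    | zero => simp
    | succ m ih =>
      intro b hb
      exact hI.pow_mul_derivation_pow_mem hδ (ih (b + 1) (by rwa [add_right_comm, add_assoc]))
  simpa using hstep n 0 (by simpa using hbase)

theorem IsDeltaIdeal.radical {I : Ideal R} (hI : IsDeltaIdeal Δ I) :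
    IsDeltaIdeal Δ I.radical := by
  rintro δ hδ x ⟨n, hn⟩
  exact ⟨_, hI.derivation_pow_mem_of_pow_mem hδ (pow_succ' x n ▸ I.mul_mem_left x hn)⟩

theorem IsDeltaPrime.isRadical [IsNoetherianRing R] {Q : Ideal R} (hQ : IsDeltaPrime Δ Q) :
    Q.IsRadical := by
  obtain ⟨n, hn⟩ := Q.exists_radical_pow_le_of_fg (IsNoetherian.noetherian _)
  exact hQ.le_of_pow_le hQ.2.1.radical hn

end CharZero

theorem Ideal.IsRadical.le_of_forall_isMaximal {R : Type*} [CommRing R] [IsJacobsonRing R]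
    {Q J : Ideal R} (hQ : Q.IsRadical) (h : ∀ M : Ideal R, M.IsMaximal → Q ≤ M → J ≤ M) :
    J ≤ Q := by
  rw [← IsJacobsonRing.out' Q hQ]
  exact le_sInf fun M ⟨hQM, hM⟩ => h M hM hQM

section LocallyClosed

variable {k R : Type*} [CommRing k] [CommRing R] [Algebra k R] {Δ : Set (Derivation k R R)}

theorem isDeltaPrime_and_not_le_of_eq_singleton {P J : Ideal R}
    (hPJ : {Q : Ideal R | IsDeltaPrime Δ Q ∧ P ≤ Q ∧ ¬ J ≤ Q} = {P}) :
    IsDeltaPrime Δ P ∧ ¬ J ≤ P := by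
  have hP : P ∈ {Q : Ideal R | IsDeltaPrime Δ Q ∧ P ≤ Q ∧ ¬ J ≤ Q} := hPJ ▸ rfl
  exact ⟨hP.1, hP.2.2⟩

theorem deltaCore_eq_of_eq_singleton {P J M : Ideal R}
    (hPJ : {Q : Ideal R | IsDeltaPrime Δ Q ∧ P ≤ Q ∧ ¬ J ≤ Q} = {P})
    (hM : IsDeltaPrime Δ (deltaCore Δ M)) (hPM : P ≤ M) (hJM : ¬ J ≤ M) :
    deltaCore Δ M = P := by
  have hP := (isDeltaPrime_and_not_le_of_eq_singleton hPJ).1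
  have hcore : deltaCore Δ M ∈ {Q : Ideal R | IsDeltaPrime Δ Q ∧ P ≤ Q ∧ ¬ J ≤ Q} :=
    ⟨hM, hP.2.1.le_deltaCore hPM, fun hJ => hJM (hJ.trans (deltaCore_le M))⟩
  rwa [hPJ] at hcore

end LocallyClosed

theorem le_of_forall_isMaximal_deltaCore_eq {k R : Type*} [Field k] [CharZero k] [CommRing R]
    [Algebra k R] [IsNoetherianRing R] [IsJacobsonRing R] {Δ : Set (Derivation k R R)}
    {Q I J : Ideal R} (hcore : ∀ M : Ideal R, M.IsMaximal → IsDeltaPrime Δ (deltaCore Δ M))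
    (hQJ : {Q' : Ideal R | IsDeltaPrime Δ Q' ∧ Q ≤ Q' ∧ ¬ J ≤ Q'} = {Q})
    (h : ∀ M : Ideal R, M.IsMaximal → deltaCore Δ M = Q → I ≤ M) : I ≤ Q := by
  obtain ⟨hQ, hJQ⟩ := isDeltaPrime_and_not_le_of_eq_singleton hQJ
  have hrad := hQ.isRadical
  have hIJ : I * J ≤ Q := hrad.le_of_forall_isMaximal fun M hM hQM => by
    by_cases hJM : J ≤ M
    · exact Ideal.mul_le_right.trans hJM
    · exact Ideal.mul_le_left.trans
        (h M hM (deltaCore_eq_of_eq_singleton hQJ (hcore M hM) hQM hJM))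
  exact (hQ.le_or_le_of_mul_le hrad hIJ).resolve_right hJQ

/-- For `R` an affine `k`-algebra, `π_m(M) = (M:Δ)` defines a continuous
surjection `π_m : max R → Δ-prim R` (closed sets of `max R`, resp. `Δ-prim R`, are the
sets of maximal, resp. `Δ`-primitive, ideals containing a fixed ideal).  If moreover
every `Δ`-primitive ideal of `R` is a locally closed point of `Δ-spec R`, then the
Zariski topology on `Δ-prim R` is the quotient topology induced by `π_m`:
`W ⊆ Δ-prim R` is closed iff `π_m⁻¹(W)` is closed in `max R`. -/
theorem deltaPrim_quotient_topology_of_locallyClosed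
    {k R : Type*} [Field k] [CharZero k] [CommRing R] [Algebra k R]
    [Algebra.FiniteType k R]
    (Δ : Set (Derivation k R R)) :
    -- π_m maps max R onto Δ-prim R
    (∀ M : Ideal R, M.IsMaximal → IsDeltaPrimitive Δ (deltaCore Δ M)) ∧
    (∀ P : Ideal R, IsDeltaPrimitive Δ P → ∃ M : Ideal R, M.IsMaximal ∧ deltaCore Δ M = P) ∧
    -- π_m is continuous
    (∀ I : Ideal R, ∃ I' : Ideal R,
      {M : Ideal R | M.IsMaximal ∧ I ≤ deltaCore Δ M} =
        {M : Ideal R | M.IsMaximal ∧ I' ≤ M}) ∧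
    -- if every Δ-primitive ideal is locally closed in Δ-spec R, the topology on
    -- Δ-prim R is the quotient topology induced by π_m
    ((∀ P : Ideal R, IsDeltaPrimitive Δ P →
        ∃ I : Ideal R, {Q : Ideal R | IsDeltaPrime Δ Q ∧ P ≤ Q ∧ ¬ I ≤ Q} = {P}) →
      ∀ W : Set (Ideal R), W ⊆ {P : Ideal R | IsDeltaPrimitive Δ P} →
        ((∃ I : Ideal R, W = {P : Ideal R | IsDeltaPrimitive Δ P ∧ I ≤ P}) ↔
          (∃ I : Ideal R,
            {M : Ideal R | M.IsMaximal ∧ deltaCore Δ M ∈ W} =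
              {M : Ideal R | M.IsMaximal ∧ I ≤ M}))) := by
  have := Algebra.FiniteType.isNoetherianRing k R
  have := isJacobsonRing_of_finiteType (A := k) (B := R)
  refine ⟨fun M hM => ⟨M, hM, rfl⟩, fun P hP => hP,
    fun I => ⟨_, setOf_isMaximal_le_deltaCore Δ I⟩, fun hlc W hW => ⟨?_, ?_⟩⟩
  · rintro ⟨I, rfl⟩
    refine ⟨_, Eq.trans ?_ (setOf_isMaximal_le_deltaCore Δ I)⟩
    exact Set.ext fun M => and_congr_right fun hM => and_iff_right ⟨M, hM, rfl⟩
  · rintro ⟨I, hI⟩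
    have hcore : ∀ M : Ideal R, M.IsMaximal → IsDeltaPrime Δ (deltaCore Δ M) := fun M hM =>
      have ⟨_, hJ⟩ := hlc _ ⟨M, hM, rfl⟩
      (isDeltaPrime_and_not_le_of_eq_singleton hJ).1
    have hfiber : ∀ M : Ideal R, M.IsMaximal → (deltaCore Δ M ∈ W ↔ I ≤ M) := fun M hM =>
      (and_iff_right hM).symm.trans ((Set.ext_iff.1 hI M).trans (and_iff_right hM))
    refine ⟨I, Set.ext fun P => ⟨fun hPW => ⟨hW hPW, ?_⟩, ?_⟩⟩
    · obtain ⟨J, hJ⟩ := hlc P (hW hPW)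
      exact le_of_forall_isMaximal_deltaCore_eq hcore hJ fun M hM hMP =>
        (hfiber M hM).1 (hMP ▸ hPW)
    · rintro ⟨⟨M, hM, rfl⟩, hIP⟩
      exact (hfiber M hM).2 (hIP.trans (deltaCore_le M))
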